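/- arXiv:2409.20376 — 2 statements merged into one kernel-verified Lean document; each statement's English description precedes it below -/
import Mathlib

section
/- Let X be a nonsingular simple G-projective variety with boundary divisors D₁,…,D_r and dual B-stable curves C₁,…,C_r, and let L = Σᵢ aᵢ Dᵢ be an ample line bundle on X (so all aᵢ > 0). Then the Seshadri constant of L at the sink x⁻ equals minᵢ aᵢ. -/
/-! With `m = minᵢ aᵢ`, the class `(a, m)` is the nonnegative combination
`m • (𝟙, 1) + ∑ᵢ (aᵢ - m) • (eᵢ, 0)` of the nef generators, while the curves `C̃ᵢ` force
`t ≤ aᵢ` for every nef `(a, t)`. So `{t | (a, t) nef}` is the interval `[0, m]`. -/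

open Finset

theorem sum_smul_mem_of_cone {M ι : Type*} [AddCommMonoid M] [Module ℝ M] {S : Set M}
    (hS : S.Nonempty) (hadd : ∀ x ∈ S, ∀ y ∈ S, x + y ∈ S)
    (hsmul : ∀ t : ℝ, 0 ≤ t → ∀ x ∈ S, t • x ∈ S) (s : Finset ι) {c : ι → ℝ} {v : ι → M}
    (hc : ∀ i ∈ s, 0 ≤ c i) (hv : ∀ i ∈ s, v i ∈ S) : ∑ i ∈ s, c i • v i ∈ S := by
  obtain ⟨x, hx⟩ := hS
  have hzero : (0 : M) ∈ S := by simpa using hsmul 0 le_rfl x hx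
  exact sum_induction _ (· ∈ S) (fun x y hx hy => hadd x hx y hy) hzero fun i hi => hsmul _ (hc i hi) _ (hv i hi)

theorem prod_eq_smul_add_sum_smul_single {ι : Type*} [Fintype ι] [DecidableEq ι]
    (a : ι → ℝ) (t : ℝ) :
    (a, t) = t • ((fun _ => (1 : ℝ)), (1 : ℝ)) +
      ∑ i, (a i - t) • ((Pi.single i 1 : ι → ℝ), (0 : ℝ)) := by
  refine Prod.ext (funext fun j => ?_) ?_
  · simp [Prod.fst_sum, Finset.sum_apply, Pi.single_apply]
  · simp [Prod.snd_sum]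

theorem mem_nef_iff {ι : Type*} [Fintype ι] [DecidableEq ι] {Nef : Set ((ι → ℝ) × ℝ)}
    (h_pull : ∀ i, ((Pi.single i 1 : ι → ℝ), (0 : ℝ)) ∈ Nef)
    (h_sum : ((fun _ => (1 : ℝ)), (1 : ℝ)) ∈ Nef)
    (h_cone_add : ∀ D ∈ Nef, ∀ D' ∈ Nef, D + D' ∈ Nef)
    (h_cone_smul : ∀ t : ℝ, 0 ≤ t → ∀ D ∈ Nef, t • D ∈ Nef)
    (h_curves : ∀ D ∈ Nef, 0 ≤ D.2 ∧ ∀ i, D.2 ≤ D.1 i) (a : ι → ℝ) (t : ℝ) :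
    (a, t) ∈ Nef ↔ 0 ≤ t ∧ ∀ i, t ≤ a i := by
  refine ⟨h_curves _, fun ⟨ht, hta⟩ => ?_⟩
  rw [prod_eq_smul_add_sum_smul_single a t]
  exact h_cone_add _ (h_cone_smul t ht _ h_sum) _ <|
    sum_smul_mem_of_cone ⟨_, h_sum⟩ h_cone_add h_cone_smul _
      (fun i _ => sub_nonneg.mpr (hta i)) fun i _ => h_pull i

/-- Let `X` be a nonsingular simple `G`-projective variety with boundary
divisors `D₁, …, D_r` and dual `B`-stable curves `Cᵢ` with `Dᵢ·Cⱼ = δᵢⱼ`, and let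
`L = ∑ᵢ aᵢ Dᵢ` be ample (all `aᵢ > 0`).  Then the Seshadri constant of `L` at the sink `x⁻`
equals `minᵢ aᵢ`.

Numerical model: divisor classes on `Bl_{x⁻}(X)` are pairs `(b, c) = ∑ bᵢ Bl^*Dᵢ − c E`;
`Nef` is the nef cone, satisfying: the pullbacks `Bl^*Dᵢ` and `∑ Bl^*Dᵢ − E` are nef, `Nef`
is a convex cone, and nef classes meet the effective curves `e` and `C̃ᵢ` nonnegatively
(i.e. `c ≥ 0` and `bᵢ − c ≥ 0`).  The Seshadri constant is
`ε(L; x⁻) = sup { t | Bl^*L − t E is nef }`. -/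
theorem stmt8 (r : ℕ) [NeZero r]
    (Nef : Set ((Fin r → ℝ) × ℝ))
    (a : Fin r → ℝ) (ha : ∀ i, 0 < a i)
    (h_pull : ∀ i, ((Pi.single i 1 : Fin r → ℝ), (0:ℝ)) ∈ Nef)
    (h_sum : ((fun _ => (1:ℝ)), (1:ℝ)) ∈ Nef)
    (h_cone_add : ∀ D ∈ Nef, ∀ D' ∈ Nef, D + D' ∈ Nef)
    (h_cone_smul : ∀ t : ℝ, 0 ≤ t → ∀ D ∈ Nef, t • D ∈ Nef)
    -- nef classes meet the effective curve classes `e` and `C̃ᵢ` nonnegatively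
    (h_curves : ∀ D ∈ Nef, 0 ≤ D.2 ∧ ∀ i, D.2 ≤ D.1 i) :
    sSup { t : ℝ | (a, t) ∈ Nef } = ⨅ i, a i := by
  have h_eq : { t : ℝ | (a, t) ∈ Nef } = Set.Icc 0 (⨅ i, a i) := by
    ext t
    rw [Set.mem_ofPred_eq, mem_nef_iff h_pull h_sum h_cone_add h_cone_smul h_curves,
      Set.mem_Icc, le_ciInf_iff (Set.finite_range a).bddBelow]
  rw [h_eq, csSup_Icc (le_ciInf fun i => (ha i).le)]
end

section
/- Let X be a nonsingular simple G-projective variety with boundary divisors D₁,…,D_r, and let L = λ Σᵢ Dᵢ with λ a positive integer. Then for each i, the Seshadri constant of L at the sink x_i⁻ of the divisor D_i equals λ. -/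
theorem stmt13_general (r : ℕ) [NeZero r] (lam : ℤ) (hlam : 0 < lam)
    (Nef : Set ((Fin r → ℝ) × ℝ))
    (h_sum : ((fun _ => (1:ℝ)), (1:ℝ)) ∈ Nef)
    (h_cone_smul : ∀ t : ℝ, 0 ≤ t → ∀ D ∈ Nef, t • D ∈ Nef)
    (h_curves : ∀ D ∈ Nef, 0 ≤ D.2 ∧ ∀ j, D.2 ≤ D.1 j) :
    sSup { t : ℝ | ((fun _ => (lam : ℝ)), t) ∈ Nef } = (lam : ℝ) := by
  refine IsGreatest.csSup_eq ⟨?_, fun t ht => ?_⟩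
  · -- `λ • (∑ Bl^*Dⱼ − Eᵢ)` is nef
    have hlamR : (0 : ℝ) ≤ lam := by exact_mod_cast hlam.le
    simpa [Prod.smul_mk, Pi.smul_def] using h_cone_smul lam hlamR _ h_sum
  · -- intersecting with the strict transform of `Cᵢ` gives `λ - t ≥ 0`
    simpa using (h_curves _ ht).2 0

/-- Let `X` be a nonsingular simple `G`-projective variety with boundary
divisors `D₁, …, D_r` and let `L = λ ∑ᵢ Dᵢ` with `λ` a positive integer.  Then for each
`i`, the Seshadri constant of `L` at the sink `xᵢ⁻` of `Dᵢ` equals `λ`.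

Numerical model (for a fixed `i`): divisor classes on `Bl_{xᵢ⁻}(X)` are pairs
`(b, c) = ∑ bⱼ Bl^*Dⱼ − c Eᵢ`; `Nef` is its nef cone, which (by the Remark following the
nef-cone lemma) satisfies: the pullbacks `Bl^*Dⱼ` and `∑ Bl^*Dⱼ − Eᵢ` are nef, it is a
convex cone, and nef classes meet the effective curves `e` and the strict transform of the
`B`-stable curve `Cᵢ ≅ ℙ¹` through `xᵢ⁻` nonnegatively (`c ≥ 0`, `bⱼ − c ≥ 0`).  The
Seshadri constant is `ε(L; xᵢ⁻) = sup { t | Bl^*L − t Eᵢ is nef }`. -/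
theorem stmt13 (r : ℕ) [NeZero r] (lam : ℤ) (hlam : 0 < lam)
    (Nef : Set ((Fin r → ℝ) × ℝ))
    (h_pull : ∀ j, ((Pi.single j 1 : Fin r → ℝ), (0:ℝ)) ∈ Nef)
    (h_sum : ((fun _ => (1:ℝ)), (1:ℝ)) ∈ Nef)
    (h_cone_add : ∀ D ∈ Nef, ∀ D' ∈ Nef, D + D' ∈ Nef)
    (h_cone_smul : ∀ t : ℝ, 0 ≤ t → ∀ D ∈ Nef, t • D ∈ Nef)
    (h_curves : ∀ D ∈ Nef, 0 ≤ D.2 ∧ ∀ j, D.2 ≤ D.1 j) :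
    sSup { t : ℝ | ((fun _ => (lam : ℝ)), t) ∈ Nef } = (lam : ℝ) :=
  stmt13_general r lam hlam Nef h_sum h_cone_smul h_curves
end
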